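/- arXiv:1806.09897 — 5 statements merged into one kernel-verified Lean document; each statement's English description precedes it below -/
import Mathlib

section
/- With the notation of the previous statement, the inverse right trivialized tangent satisfies dτ⁻¹_{−ξ}(Ad_{τ(−ξ)} δ) = dτ⁻¹_ξ(δ) for all ξ, δ in g. -/
open Matrix

attribute [local instance] Matrix.normedAddCommGroup Matrix.normedSpace

noncomputable def mulCLM (n : ℕ) :
    Matrix (Fin n) (Fin n) ℝ →L[ℝ] Matrix (Fin n) (Fin n) ℝ →L[ℝ] Matrix (Fin n) (Fin n) ℝ :=
  LinearMap.toContinuousLinearMap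
    { toFun := fun x => LinearMap.toContinuousLinearMap (LinearMap.mulLeft ℝ x)
      map_add' := by intro a b; ext c; simp [add_mul]
      map_smul' := by intro r a; ext c; simp [smul_mul_assoc] }

@[simp] lemma mulCLM_apply (n : ℕ) (a b : Matrix (Fin n) (Fin n) ℝ) :
    mulCLM n a b = a * b := rfl

lemma key_deriv_inv (n : ℕ) (τ : Matrix (Fin n) (Fin n) ℝ → Matrix (Fin n) (Fin n) ℝ)
    (hτ : ContDiff ℝ (⊤ : ℕ∞) τ) (hτinv : ∀ ξ, τ ξ * τ (-ξ) = 1)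
    (ξ v : Matrix (Fin n) (Fin n) ℝ) :
    fderiv ℝ τ ξ v * τ (-ξ) + τ ξ * (fderiv ℝ τ (-ξ) (-v)) = 0 := by
  have hd : ∀ x, HasFDerivAt τ (fderiv ℝ τ x) x :=
    fun x => (hτ.differentiable (by simp) x).hasFDerivAt
  have h1 : HasFDerivAt (fun x => τ (-x)) ((fderiv ℝ τ (-ξ)).comp (-(ContinuousLinearMap.id ℝ _))) ξ := by
    have := (hd (-ξ)).comp ξ ((hasFDerivAt_id ξ).neg)
    exact this
  have hB := (mulCLM n).isBoundedBilinearMap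
  have hpair : HasFDerivAt (fun x => (τ x, τ (-x)))
      ((fderiv ℝ τ ξ).prod ((fderiv ℝ τ (-ξ)).comp (-(ContinuousLinearMap.id ℝ _)))) ξ :=
    (hd ξ).prodMk h1
  have hprod : HasFDerivAt (fun x => τ x * τ (-x))
      ((hB.deriv (τ ξ, τ (-ξ))).comp
        ((fderiv ℝ τ ξ).prod ((fderiv ℝ τ (-ξ)).comp (-(ContinuousLinearMap.id ℝ _))))) ξ :=
    by have := (hB.hasFDerivAt (τ ξ, τ (-ξ))).comp ξ hpair; exact this
  have hconst : HasFDerivAt (fun x => τ x * τ (-x))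
      (0 : Matrix (Fin n) (Fin n) ℝ →L[ℝ] Matrix (Fin n) (Fin n) ℝ) ξ := by
    have : (fun x : Matrix (Fin n) (Fin n) ℝ => τ x * τ (-x)) = fun _ => (1 : Matrix (Fin n) (Fin n) ℝ) := by
      funext x; exact hτinv x
    rw [this]
    exact hasFDerivAt_const (E := Matrix (Fin n) (Fin n) ℝ) (𝕜 := ℝ) (1 : Matrix (Fin n) (Fin n) ℝ) ξ
  have heq := hprod.unique hconst
  have := congrArg (fun L => L v) heq
  have h2 : (hB.deriv (τ ξ, τ (-ξ))) (fderiv ℝ τ ξ v, fderiv ℝ τ (-ξ) (-v)) = 0 := this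
  rw [IsBoundedBilinearMap.deriv_apply] at h2
  dsimp only at h2
  rw [add_comm] at h2
  exact h2

/-- For a (matrix) Lie group `G` and a group difference map `τ : 𝔤 → G`
(a smooth map with `τ(0) = e` and `τ(ξ) · τ(−ξ) = 1`), with right trivialized
tangent `dτ_ξ(δ) = Dτ(ξ)(δ) · τ(−ξ)` and inverse right trivialized tangent
`dτ⁻¹_ξ` (the two-sided inverse of `dτ_ξ`), one has
`dτ⁻¹_{−ξ}(Ad_{τ(−ξ)} δ) = dτ⁻¹_ξ(δ)`, where `Ad_{τ(−ξ)} δ = τ(−ξ) · δ · τ(ξ)`. -/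
theorem inverse_right_trivialized_tangent_ad (n : ℕ)
    (τ : Matrix (Fin n) (Fin n) ℝ → Matrix (Fin n) (Fin n) ℝ)
    (hτ : ContDiff ℝ (⊤ : ℕ∞) τ) (hτ0 : τ 0 = 1)
    (hτinv : ∀ ξ, τ ξ * τ (-ξ) = 1)
    (dτinv : Matrix (Fin n) (Fin n) ℝ → Matrix (Fin n) (Fin n) ℝ → Matrix (Fin n) (Fin n) ℝ)
    (hright : ∀ ξ δ, fderiv ℝ τ ξ (dτinv ξ δ) * τ (-ξ) = δ)
    (hleft : ∀ ξ δ, dτinv ξ (fderiv ℝ τ ξ δ * τ (-ξ)) = δ) :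
    ∀ ξ δ : Matrix (Fin n) (Fin n) ℝ,
      dτinv (-ξ) (τ (-ξ) * δ * τ ξ) = dτinv ξ δ := by
  intro ξ δ
  set v := dτinv ξ δ with hv
  have hδ : fderiv ℝ τ ξ v * τ (-ξ) = δ := hright ξ δ
  have hkey := key_deriv_inv n τ hτ hτinv ξ v
  rw [map_neg] at hkey
  -- fderiv τ ξ v * τ(-ξ) = τ ξ * fderiv τ (-ξ) v
  have hk : fderiv ℝ τ ξ v * τ (-ξ) = τ ξ * fderiv ℝ τ (-ξ) v := by
    have := hkey
    rw [mul_neg] at this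
    linear_combination (norm := abel) this
  have hinv2 : τ (-ξ) * τ ξ = 1 := by
    have := hτinv (-ξ); rwa [neg_neg] at this
  have hexpr : τ (-ξ) * δ * τ ξ = fderiv ℝ τ (-ξ) v * τ (-(-ξ)) := by
    rw [neg_neg, ← hδ, hk, ← mul_assoc, hinv2, one_mul]
  rw [hexpr, hleft (-ξ) v]
end

section
/- For a simple thermodynamical system governed by d/dt(∂L/∂q̇) − ∂L/∂q = F^ext + F^fr together with (∂L/∂S)Ṡ = ⟨F^fr, q̇⟩ − P^ext_H, the energy E(q,q̇,S) = ⟨∂L/∂q̇, q̇⟩ − L satisfies dE/dt = ⟨F^ext, q̇⟩ + P^ext_H along any smooth solution. -/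
open RealInnerProductSpace

noncomputable section

/-- Energy balance (first law of thermodynamics) for a simple thermodynamical
system: along a smooth solution of
`d/dt(∂L/∂q̇) − ∂L/∂q = F^ext + F^fr` and `(∂L/∂S)Ṡ = ⟨F^fr, q̇⟩ − P^ext_H`,
the energy `E = ⟨∂L/∂q̇, q̇⟩ − L` satisfies `dE/dt = ⟨F^ext, q̇⟩ + P^ext_H`. -/
theorem energy_balance (n : ℕ)
    (L : EuclideanSpace ℝ (Fin n) → EuclideanSpace ℝ (Fin n) → ℝ → ℝ)
    (Fext Ffr : EuclideanSpace ℝ (Fin n) → EuclideanSpace ℝ (Fin n) → ℝ →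
      EuclideanSpace ℝ (Fin n))
    (PH : EuclideanSpace ℝ (Fin n) → EuclideanSpace ℝ (Fin n) → ℝ → ℝ)
    (q : ℝ → EuclideanSpace ℝ (Fin n)) (S : ℝ → ℝ)
    (hL : ContDiff ℝ (⊤ : ℕ∞) fun p : EuclideanSpace ℝ (Fin n) × EuclideanSpace ℝ (Fin n) × ℝ =>
      L p.1 p.2.1 p.2.2)
    (hq : ContDiff ℝ (⊤ : ℕ∞) q) (hS : ContDiff ℝ (⊤ : ℕ∞) S)
    (heq1 : ∀ t (w : EuclideanSpace ℝ (Fin n)),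
      deriv (fun s => (fderiv ℝ (fun v => L (q s) v (S s)) (deriv q s)) w) t
          - (fderiv ℝ (fun x => L x (deriv q t) (S t)) (q t)) w
        = ⟪Fext (q t) (deriv q t) (S t) + Ffr (q t) (deriv q t) (S t), w⟫)
    (heq2 : ∀ t,
      deriv (fun r => L (q t) (deriv q t) r) (S t) * deriv S t
        = ⟪Ffr (q t) (deriv q t) (S t), deriv q t⟫ - PH (q t) (deriv q t) (S t)) :
    ∀ t, deriv (fun s =>
        (fderiv ℝ (fun v => L (q s) v (S s)) (deriv q s)) (deriv q s)
          - L (q s) (deriv q s) (S s)) t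
      = ⟪Fext (q t) (deriv q t) (S t), deriv q t⟫ + PH (q t) (deriv q t) (S t) := by
  intro t
  set F : EuclideanSpace ℝ (Fin n) × EuclideanSpace ℝ (Fin n) × ℝ → ℝ :=
    fun p => L p.1 p.2.1 p.2.2 with hF
  have hFc : ContDiff ℝ (⊤ : ℕ∞) F := hL
  have hq' : ContDiff ℝ (⊤ : ℕ∞) (deriv q) :=
    (contDiff_infty_iff_deriv.mp (hq.of_le (by simp))).2
  set j1 : EuclideanSpace ℝ (Fin n) →L[ℝ]
      EuclideanSpace ℝ (Fin n) × EuclideanSpace ℝ (Fin n) × ℝ :=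
    (ContinuousLinearMap.id ℝ _).prod 0 with hj1
  set j2 : EuclideanSpace ℝ (Fin n) →L[ℝ]
      EuclideanSpace ℝ (Fin n) × EuclideanSpace ℝ (Fin n) × ℝ :=
    (0 : EuclideanSpace ℝ (Fin n) →L[ℝ] EuclideanSpace ℝ (Fin n)).prod
      ((ContinuousLinearMap.id ℝ _).prod 0) with hj2
  have h1top : (1 : WithTop ℕ∞) ≤ ((⊤ : ℕ∞) : WithTop ℕ∞) := by exact_mod_cast le_top
  have hFd : ∀ p, HasFDerivAt F (fderiv ℝ F p) p :=
    fun p => (hFc.differentiable (by simp) p).hasFDerivAt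
  have hpart1 : ∀ (x v : EuclideanSpace ℝ (Fin n)) (r : ℝ),
      HasFDerivAt (fun x' => L x' v r) ((fderiv ℝ F (x, v, r)).comp j1) x := fun x v r =>
    (hFd (x, v, r)).comp (f := fun x' : EuclideanSpace ℝ (Fin n) => (id x', v, r)) x ((hasFDerivAt_id x).prodMk (hasFDerivAt_const (v, r) x))
  have hpart2 : ∀ (x v : EuclideanSpace ℝ (Fin n)) (r : ℝ),
      HasFDerivAt (fun v' => L x v' r) ((fderiv ℝ F (x, v, r)).comp j2) v := fun x v r =>
    (hFd (x, v, r)).comp (f := fun v' : EuclideanSpace ℝ (Fin n) => (x, id v', r)) v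
      ((hasFDerivAt_const x v).prodMk ((hasFDerivAt_id v).prodMk (hasFDerivAt_const r v)))
  have hpart3 : ∀ (x v : EuclideanSpace ℝ (Fin n)) (r : ℝ),
      HasDerivAt (fun r' => L x v r') ((fderiv ℝ F (x, v, r)) (0, 0, 1)) r := fun x v r =>
    (hFd (x, v, r)).comp_hasDerivAt (f := fun r' : ℝ => (x, v, id r')) r
      ((hasDerivAt_const r x).prodMk ((hasDerivAt_const r v).prodMk (hasDerivAt_id r)))
  have key1 : ∀ (x v : EuclideanSpace ℝ (Fin n)) (r : ℝ),
      fderiv ℝ (fun x' => L x' v r) x = (fderiv ℝ F (x, v, r)).comp j1 :=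
    fun x v r => (hpart1 x v r).fderiv
  have key2 : ∀ (x v : EuclideanSpace ℝ (Fin n)) (r : ℝ),
      fderiv ℝ (fun v' => L x v' r) v = (fderiv ℝ F (x, v, r)).comp j2 :=
    fun x v r => (hpart2 x v r).fderiv
  have key3 : ∀ (x v : EuclideanSpace ℝ (Fin n)) (r : ℝ),
      deriv (fun r' => L x v r') r = (fderiv ℝ F (x, v, r)) (0, 0, 1) :=
    fun x v r => (hpart3 x v r).deriv
  set g : ℝ → (EuclideanSpace ℝ (Fin n) →L[ℝ] ℝ) :=
    fun s => (fderiv ℝ F (q s, deriv q s, S s)).comp j2 with hg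
  have hgdiff : Differentiable ℝ g := by
    have hc : ContDiff ℝ (⊤ : ℕ∞) (fun s => (q s, deriv q s, S s)) :=
      (hq.of_le (by simp)).prodMk (hq'.prodMk (hS.of_le (by simp)))
    have h1 : ContDiff ℝ (⊤ : ℕ∞) (fun s => fderiv ℝ F (q s, deriv q s, S s)) :=
      (hFc.fderiv_right (by simp)).comp hc
    exact (h1.differentiable (by simp)).clm_comp (differentiable_const j2)
  have hgw : ∀ w : EuclideanSpace ℝ (Fin n),
      HasDerivAt (fun s => g s w) ((deriv g t) w) t := by
    intro w
    have h := ((hgdiff t).hasDerivAt).clm_apply (hasDerivAt_const t w)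
    simpa using h
  have heq1' : (deriv g t) (deriv q t)
      = (fderiv ℝ F (q t, deriv q t, S t)) (j1 (deriv q t))
        + ⟪Fext (q t) (deriv q t) (S t) + Ffr (q t) (deriv q t) (S t), deriv q t⟫ := by
    have h := heq1 t (deriv q t)
    have hfe : (fun s => (fderiv ℝ (fun v => L (q s) v (S s)) (deriv q s)) (deriv q t))
        = fun s => g s (deriv q t) := by
      funext s; rw [key2]
    rw [hfe, (hgw (deriv q t)).deriv, key1] at h
    simp only [ContinuousLinearMap.comp_apply] at h
    linarith [h]
  have hkin : HasDerivAt (fun s => g s (deriv q s))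
      ((deriv g t) (deriv q t) + g t (deriv (deriv q) t)) t :=
    ((hgdiff t).hasDerivAt).clm_apply ((hq'.differentiable (by simp) t).hasDerivAt)
  have hLag : HasDerivAt (fun s => L (q s) (deriv q s) (S s))
      ((fderiv ℝ F (q t, deriv q t, S t))
        (deriv q t, deriv (deriv q) t, deriv S t)) t :=
    (hFd (q t, deriv q t, S t)).comp_hasDerivAt (f := fun s : ℝ => (q s, deriv q s, S s)) t
      (((hq.differentiable (by simp) t).hasDerivAt).prodMk
        (((hq'.differentiable (by simp) t).hasDerivAt).prodMk
          ((hS.differentiable (by simp) t).hasDerivAt)))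
  have hfun : (fun s =>
      (fderiv ℝ (fun v => L (q s) v (S s)) (deriv q s)) (deriv q s)
        - L (q s) (deriv q s) (S s))
      = fun s => g s (deriv q s) - L (q s) (deriv q s) (S s) := by
    funext s; rw [key2]
  rw [hfun, (show HasDerivAt (fun s => g s (deriv q s) - L (q s) (deriv q s) (S s)) _ t from hkin.sub hLag).deriv]
  set D := fderiv ℝ F (q t, deriv q t, S t) with hD
  have hdec : D (deriv q t, deriv (deriv q) t, deriv S t)
      = D (j1 (deriv q t)) + D (j2 (deriv (deriv q) t)) + deriv S t * D (0, 0, 1) := by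
    have h1 : (deriv q t, deriv (deriv q) t, deriv S t)
        = j1 (deriv q t) + j2 (deriv (deriv q) t)
          + deriv S t • ((0 : EuclideanSpace ℝ (Fin n)),
              (0 : EuclideanSpace ℝ (Fin n)), (1 : ℝ)) := by
      simp [hj1, hj2, Prod.ext_iff]
    rw [h1, map_add, map_add, map_smul, smul_eq_mul]
  have hg2 : g t (deriv (deriv q) t) = D (j2 (deriv (deriv q) t)) := rfl
  have h3 : D (0, 0, 1) * deriv S t
      = ⟪Ffr (q t) (deriv q t) (S t), deriv q t⟫ - PH (q t) (deriv q t) (S t) := by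
    have h := heq2 t
    rw [key3] at h
    linarith [h]
  rw [heq1', hg2, hdec, inner_add_left]
  linarith [h3]

end
end

section
/- With the double-bracket friction force f^fr(μ,S) = λ(μ,S) ad*_{(ad*_{∂h/∂μ}μ)♯} μ and the entropy equation (∂h/∂S) Ṡ = −⟨f^fr(μ,S), ∂h/∂μ(μ,S)⟩, if T = ∂h/∂S > 0 then T Ṡ = λ(μ,S) |ad*_{∂h/∂μ(μ,S)} μ|², hence Ṡ ≥ 0. -/
open RealInnerProductSpace

noncomputable section

lemma B_antisymm {n : ℕ}
    (B : EuclideanSpace ℝ (Fin n) →ₗ[ℝ] EuclideanSpace ℝ (Fin n) →ₗ[ℝ]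
      EuclideanSpace ℝ (Fin n)) (hB : ∀ ξ, B ξ ξ = 0) (a b : EuclideanSpace ℝ (Fin n)) :
    B a b = - B b a := by
  have h0 := hB (a + b)
  simp [map_add, LinearMap.add_apply, hB] at h0
  exact eq_neg_of_add_eq_zero_right h0

/-- With the double-bracket friction force
`f^fr(μ,S) = λ(μ,S) ad*_{(ad*_{∂h/∂μ}μ)♯} μ` and the entropy equation
`(∂h/∂S) Ṡ = −⟪f^fr(μ,S), ∂h/∂μ(μ,S)⟫`, if `T = ∂h/∂S > 0` then
`T Ṡ = λ(μ,S) |ad*_{∂h/∂μ(μ,S)} μ|²`, hence `Ṡ ≥ 0`.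
(The Lie algebra is realized as `ℝⁿ` with a bilinear Lie bracket `B` and the
Euclidean inner product `γ`, identifying `𝔤*` with `𝔤` via `γ`, so that `♯` is
the identity and `ad*_ξ = (B ξ)†`.) -/
theorem double_bracket_entropy_increase (n : ℕ)
    (B : EuclideanSpace ℝ (Fin n) →ₗ[ℝ] EuclideanSpace ℝ (Fin n) →ₗ[ℝ]
      EuclideanSpace ℝ (Fin n))
    (hB : ∀ ξ, B ξ ξ = 0)
    (h : EuclideanSpace ℝ (Fin n) → ℝ → ℝ)
    (hh : ContDiff ℝ (⊤ : ℕ∞) fun p : EuclideanSpace ℝ (Fin n) × ℝ => h p.1 p.2)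
    (lam : EuclideanSpace ℝ (Fin n) → ℝ → ℝ) (hlam : ∀ μ S, 0 < lam μ S)
    (μ : ℝ → EuclideanSpace ℝ (Fin n)) (S : ℝ → ℝ)
    (hμ : Differentiable ℝ μ) (hS : Differentiable ℝ S)
    (hT : ∀ t, 0 < deriv (fun r => h (μ t) r) (S t))
    (hent : ∀ t, deriv (fun r => h (μ t) r) (S t) * deriv S t
      = -⟪lam (μ t) (S t) • LinearMap.adjoint
            (B (LinearMap.adjoint (B (gradient (fun x => h x (S t)) (μ t))) (μ t))) (μ t),
          gradient (fun x => h x (S t)) (μ t)⟫) :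
    ∀ t, deriv (fun r => h (μ t) r) (S t) * deriv S t
        = lam (μ t) (S t) *
          ‖LinearMap.adjoint (B (gradient (fun x => h x (S t)) (μ t))) (μ t)‖ ^ 2 ∧
      0 ≤ deriv S t := by
  intro t
  set g := gradient (fun x => h x (S t)) (μ t) with hg
  set ν := LinearMap.adjoint (B g) (μ t) with hν
  have key : deriv (fun r => h (μ t) r) (S t) * deriv S t
      = lam (μ t) (S t) * ‖ν‖ ^ 2 := by
    rw [hent t]
    have h1 : ⟪LinearMap.adjoint (B ν) (μ t), g⟫ = ⟪μ t, B ν g⟫ := by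
      rw [LinearMap.adjoint_inner_left]
    have h2 : B ν g = - B g ν := B_antisymm B hB ν g
    have h3 : ⟪μ t, B g ν⟫ = ⟪ν, ν⟫ := by
      rw [hν, LinearMap.adjoint_inner_left]
    rw [inner_smul_left, h1, h2, inner_neg_right, h3, real_inner_self_eq_norm_sq]
    simp [mul_comm]
  refine ⟨key, ?_⟩
  have hTpos := hT t
  have hrhs : 0 ≤ lam (μ t) (S t) * ‖ν‖ ^ 2 :=
    mul_nonneg (hlam _ _).le (by positivity)
  nlinarith [key]

end
end

section
/- Let G be a Lie group with Lie algebra g, ℓ: g × O × R → R a reduced Lagrangian on g times an orbit O ⊂ M times R, and suppose (ξ(t), a(t), S(t)) satisfies the thermodynamical Euler-Poincaré equations: d/dt(∂ℓ/∂ξ) = ad*_ξ(∂ℓ/∂ξ) − J(∂ℓ/∂a) + f^ext + f^fr, (∂ℓ/∂S)Ṡ = ⟨f^fr, ξ⟩ − p^ext_H, and ȧ + ξ_M(a) = 0. Then the reduced energy e(ξ,a,S) = ⟨∂ℓ/∂ξ, ξ⟩ − ℓ(ξ,a,S) satisfies de/dt = ⟨f^ext, ξ⟩ + p^ext_H along the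 solution. -/
open RealInnerProductSpace

noncomputable section

/-- Energy balance for the thermodynamical Euler–Poincaré equations.
The Lie algebra is realized as `ℝⁿ` with a bilinear Lie bracket `B` (so that
`ad*_ξ = (B ξ)†`), the advected parameters live in `ℝᵐ` with a linear
infinitesimal action `ρ` (so `ξ_M(a) = ρ ξ a` and the momentum map is
`J(α, a) = (ρ(·) a)† α = (ρ.flip a)† α`), and duals are identified with the
spaces themselves via the Euclidean inner products (so `∂ℓ/∂ξ`, `∂ℓ/∂a` are
gradients). Along a solution of
`d/dt(∂ℓ/∂ξ) = ad*_ξ(∂ℓ/∂ξ) − J(∂ℓ/∂a) + f^ext + f^fr`,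
`(∂ℓ/∂S)Ṡ = ⟨f^fr, ξ⟩ − p^ext_H`, `ȧ + ξ_M(a) = 0`,
the reduced energy `e = ⟨∂ℓ/∂ξ, ξ⟩ − ℓ` satisfies
`de/dt = ⟨f^ext, ξ⟩ + p^ext_H`. -/
theorem reduced_energy_balance (n m : ℕ)
    (B : EuclideanSpace ℝ (Fin n) →ₗ[ℝ] EuclideanSpace ℝ (Fin n) →ₗ[ℝ]
      EuclideanSpace ℝ (Fin n))
    (hB : ∀ ξ, B ξ ξ = 0)
    (ρ : EuclideanSpace ℝ (Fin n) →ₗ[ℝ] EuclideanSpace ℝ (Fin m) →ₗ[ℝ]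
      EuclideanSpace ℝ (Fin m))
    (ℓ : EuclideanSpace ℝ (Fin n) → EuclideanSpace ℝ (Fin m) → ℝ → ℝ)
    (fext ffr : EuclideanSpace ℝ (Fin n) → EuclideanSpace ℝ (Fin m) → ℝ →
      EuclideanSpace ℝ (Fin n))
    (pH : EuclideanSpace ℝ (Fin n) → EuclideanSpace ℝ (Fin m) → ℝ → ℝ)
    (ξ : ℝ → EuclideanSpace ℝ (Fin n)) (a : ℝ → EuclideanSpace ℝ (Fin m)) (S : ℝ → ℝ)
    (hℓ : ContDiff ℝ (⊤ : ℕ∞) fun p :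
      EuclideanSpace ℝ (Fin n) × EuclideanSpace ℝ (Fin m) × ℝ => ℓ p.1 p.2.1 p.2.2)
    (hξ : ContDiff ℝ (⊤ : ℕ∞) ξ) (ha : ContDiff ℝ (⊤ : ℕ∞) a) (hS : ContDiff ℝ (⊤ : ℕ∞) S)
    (heq1 : ∀ t,
      deriv (fun s => gradient (fun x => ℓ x (a s) (S s)) (ξ s)) t
        = LinearMap.adjoint (B (ξ t)) (gradient (fun x => ℓ x (a t) (S t)) (ξ t))
          - LinearMap.adjoint (ρ.flip (a t)) (gradient (fun y => ℓ (ξ t) y (S t)) (a t))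
          + fext (ξ t) (a t) (S t) + ffr (ξ t) (a t) (S t))
    (heq2 : ∀ t,
      deriv (fun r => ℓ (ξ t) (a t) r) (S t) * deriv S t
        = ⟪ffr (ξ t) (a t) (S t), ξ t⟫ - pH (ξ t) (a t) (S t))
    (heq3 : ∀ t, deriv a t + ρ (ξ t) (a t) = 0) :
    ∀ t, deriv (fun s =>
        ⟪gradient (fun x => ℓ x (a s) (S s)) (ξ s), ξ s⟫ - ℓ (ξ s) (a s) (S s)) t
      = ⟪fext (ξ t) (a t) (S t), ξ t⟫ + pH (ξ t) (a t) (S t) := by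
  intro t
  classical
  -- abbreviations
  let F : EuclideanSpace ℝ (Fin n) × EuclideanSpace ℝ (Fin m) × ℝ → ℝ := fun p => ℓ p.1 p.2.1 p.2.2
  have hFc : ContDiff ℝ (⊤ : ℕ∞) F := hℓ
  have hFd : Differentiable ℝ F := hFc.differentiable (by simp)
  let c : ℝ → EuclideanSpace ℝ (Fin n) × EuclideanSpace ℝ (Fin m) × ℝ := fun s => (ξ s, a s, S s)
  have hξd : Differentiable ℝ ξ := hξ.differentiable (by simp)
  have had : Differentiable ℝ a := ha.differentiable (by simp)
  have hSd : Differentiable ℝ S := hS.differentiable (by simp)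
  have hc : ∀ s, HasDerivAt c (deriv ξ s, deriv a s, deriv S s) s := fun s =>
    (HasDerivAt.prodMk (hξd s).hasDerivAt (HasDerivAt.prodMk ((had s).hasDerivAt) (hSd s).hasDerivAt))
  set D : EuclideanSpace ℝ (Fin n) × EuclideanSpace ℝ (Fin m) × ℝ → (EuclideanSpace ℝ (Fin n) × EuclideanSpace ℝ (Fin m) × ℝ) →L[ℝ] ℝ := fun p => fderiv ℝ F p with hD
  let L1 : EuclideanSpace ℝ (Fin n) →L[ℝ] EuclideanSpace ℝ (Fin n) × EuclideanSpace ℝ (Fin m) × ℝ := ContinuousLinearMap.inl ℝ (EuclideanSpace ℝ (Fin n)) (EuclideanSpace ℝ (Fin m) × ℝ)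
  let L2 : EuclideanSpace ℝ (Fin m) →L[ℝ] EuclideanSpace ℝ (Fin n) × EuclideanSpace ℝ (Fin m) × ℝ :=
    (ContinuousLinearMap.inr ℝ (EuclideanSpace ℝ (Fin n)) (EuclideanSpace ℝ (Fin m) × ℝ)).comp (ContinuousLinearMap.inl ℝ (EuclideanSpace ℝ (Fin m)) ℝ)
  -- slice derivatives
  have hslice1 : ∀ s, HasFDerivAt (fun x => ℓ x (a s) (S s)) ((D (c s)).comp L1) (ξ s) := by
    intro s
    have h1 : HasFDerivAt (fun x : EuclideanSpace ℝ (Fin n) => (x, a s, S s)) L1 (ξ s) :=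
      HasFDerivAt.prodMk (hasFDerivAt_id _) (hasFDerivAt_const _ _)
    exact ((hFd (c s)).hasFDerivAt).comp (ξ s) h1
  have hslice2 : ∀ s, HasFDerivAt (fun y => ℓ (ξ s) y (S s)) ((D (c s)).comp L2) (a s) := by
    intro s
    have h1 : HasFDerivAt (fun y : EuclideanSpace ℝ (Fin m) => ((ξ s, y, S s) : EuclideanSpace ℝ (Fin n) × EuclideanSpace ℝ (Fin m) × ℝ)) L2 (a s) :=
      by have := HasFDerivAt.prodMk (hasFDerivAt_const (ξ s) (a s)) (HasFDerivAt.prodMk (hasFDerivAt_id (𝕜 := ℝ) (a s)) (hasFDerivAt_const (S s) (a s))); exact this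
    exact ((hFd (c s)).hasFDerivAt).comp (a s) h1
  have hslice3 : ∀ s, HasDerivAt (fun r => ℓ (ξ s) (a s) r) (D (c s) (0, 0, 1)) (S s) := by
    intro s
    have h1 : HasDerivAt (fun r : ℝ => ((ξ s, a s, r) : EuclideanSpace ℝ (Fin n) × EuclideanSpace ℝ (Fin m) × ℝ)) ((0 : EuclideanSpace ℝ (Fin n)), (0 : EuclideanSpace ℝ (Fin m)), (1 : ℝ)) (S s) :=
      HasDerivAt.prodMk (hasDerivAt_const _ _) (HasDerivAt.prodMk (hasDerivAt_const _ _) (hasDerivAt_id _))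
    exact ((hFd (c s)).hasFDerivAt).comp_hasDerivAt (S s) h1
  -- gradients
  set M : ℝ → EuclideanSpace ℝ (Fin n) := fun s => gradient (fun x => ℓ x (a s) (S s)) (ξ s) with hM
  have hgrad1 : ∀ s, M s = (InnerProductSpace.toDual ℝ (EuclideanSpace ℝ (Fin n))).symm ((D (c s)).comp L1) := by
    intro s
    rw [hM]
    show gradient (fun x => ℓ x (a s) (S s)) (ξ s) = _
    rw [gradient, (hslice1 s).fderiv]
  have hgrad1' : ∀ s (u : EuclideanSpace ℝ (Fin n)), ⟪M s, u⟫ = D (c s) (L1 u) := by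
    intro s u
    rw [hgrad1 s, InnerProductSpace.toDual_symm_apply]
    rfl
  set N : EuclideanSpace ℝ (Fin m) := gradient (fun y => ℓ (ξ t) y (S t)) (a t) with hN
  have hgrad2' : ∀ v : EuclideanSpace ℝ (Fin m), ⟪N, v⟫ = D (c t) (L2 v) := by
    intro v
    rw [hN, gradient, (hslice2 t).fderiv, InnerProductSpace.toDual_symm_apply]
    rfl
  -- differentiability of M
  have hMdiff : Differentiable ℝ M := by
    have hDc : Differentiable ℝ fun s => D (c s) := by
      have h1 : ContDiff ℝ (⊤ : ℕ∞) fun p : EuclideanSpace ℝ (Fin n) × EuclideanSpace ℝ (Fin m) × ℝ => fderiv ℝ F p := hFc.fderiv_right (by simp)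
      have h2 : ContDiff ℝ (⊤ : ℕ∞) c := ContDiff.prodMk hξ (ContDiff.prodMk ha hS)
      exact (h1.comp h2).differentiable (by simp)
    have : M = fun s => (InnerProductSpace.toDual ℝ (EuclideanSpace ℝ (Fin n))).symm ((D (c s)).comp L1) :=
      funext hgrad1
    rw [this]
    exact (InnerProductSpace.toDual ℝ (EuclideanSpace ℝ (Fin n))).symm.differentiable.comp
      (hDc.clm_comp (differentiable_const L1))
  -- product rule
  have hprod : HasDerivAt (fun s => ⟪M s, ξ s⟫)
      (⟪M t, deriv ξ t⟫ + ⟪deriv M t, ξ t⟫) t :=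
    HasDerivAt.inner ℝ (hMdiff t).hasDerivAt (hξd t).hasDerivAt
  -- chain rule for ℓ along the curve
  have hchain : HasDerivAt (fun s => ℓ (ξ s) (a s) (S s))
      (D (c t) (deriv ξ t, deriv a t, deriv S t)) t :=
    ((hFd (c t)).hasFDerivAt).comp_hasDerivAt t (hc t)
  have htotal : HasDerivAt (fun s => ⟪M s, ξ s⟫ - ℓ (ξ s) (a s) (S s))
      (⟪M t, deriv ξ t⟫ + ⟪deriv M t, ξ t⟫
        - D (c t) (deriv ξ t, deriv a t, deriv S t)) t := hprod.sub hchain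
  -- decompose the full derivative of ℓ
  have hdec : D (c t) (deriv ξ t, deriv a t, deriv S t)
      = ⟪M t, deriv ξ t⟫ + ⟪N, deriv a t⟫
        + deriv (fun r => ℓ (ξ t) (a t) r) (S t) * deriv S t := by
    have hsplit : (deriv ξ t, deriv a t, deriv S t)
        = L1 (deriv ξ t) + L2 (deriv a t) + deriv S t • ((0 : EuclideanSpace ℝ (Fin n)), (0 : EuclideanSpace ℝ (Fin m)), (1 : ℝ)) := by
      show (deriv ξ t, deriv a t, deriv S t) = (_, _, _) + (_, _, _) + (_, _, _)
      simp [L1, L2, Prod.ext_iff]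
    rw [hsplit, map_add, map_add, map_smul, ← hgrad1' t, ← hgrad2', (hslice3 t).deriv,
      smul_eq_mul]
    ring
  have hadjB : ⟪LinearMap.adjoint (B (ξ t)) (M t), ξ t⟫ = 0 := by
    rw [LinearMap.adjoint_inner_left, hB, inner_zero_right]
  have hadjρ : ⟪LinearMap.adjoint (ρ.flip (a t)) N, ξ t⟫ = ⟪N, ρ (ξ t) (a t)⟫ := by
    rw [LinearMap.adjoint_inner_left, LinearMap.flip_apply]
  have hat : deriv a t = -(ρ (ξ t) (a t)) := eq_neg_of_add_eq_zero_left (heq3 t)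
  have h2 := heq2 t
  -- finish
  rw [htotal.deriv, hdec, heq1 t]
  rw [inner_add_left, inner_add_left, inner_sub_left, hadjB, hadjρ, hat, inner_neg_right, h2]
  ring

end
end

section
/- For the heavy top in a Stokes flow with reduced equations Π̇ + Ω × Π = −8πμa³ Ω + mgℓ Γ × χ, T Ṡ = 8πμa³ |Ω|², and Γ̇ = −Ω × Γ (where Π = I Ω, I a symmetric positive-definite inertia matrix), the total energy e = (1/2) IΩ·Ω + mgℓ Γ·χ + U(S) is constant in time, where the internal energy U satisfies U'(S) = T(S) > 0. -/
open Matrix Real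

/-!
Along the flow, `d/dt (½ IΩ·Ω) = IΩ̇·Ω` by symmetry of `I`. Substituting the momentum equation,
the gyroscopic term `(Ω × IΩ)·Ω` vanishes, the gravitational torque `mgℓ (Γ × χ)·Ω` cancels the
change `mgℓ Γ̇·χ = -mgℓ (Ω × Γ)·χ` of potential energy (a cyclic permutation of the triple
product), and the viscous dissipation `8πμa³ |Ω|²` is exactly the heating `U'(S) Ṡ = T Ṡ`.
-/

section Calculus

variable {ι : Type*} [Fintype ι] {f g : ℝ → ι → ℝ} {f' g' : ι → ℝ} {t : ℝ}

theorem HasDerivAt.dotProduct (hf : HasDerivAt f f' t) (hg : HasDerivAt g g' t) :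
    HasDerivAt (fun s => f s ⬝ᵥ g s) (f' ⬝ᵥ g t + f t ⬝ᵥ g') t := by
  have hfi := hasDerivAt_pi.mp hf
  have hgi := hasDerivAt_pi.mp hg
  simpa [_root_.dotProduct, Finset.sum_add_distrib] using
    HasDerivAt.fun_sum (u := Finset.univ) fun i _ => (hfi i).mul (hgi i)

theorem HasDerivAt.mulVec (A : Matrix ι ι ℝ) (hf : HasDerivAt f f' t) :
    HasDerivAt (fun s => A *ᵥ f s) (A *ᵥ f') t :=
  (LinearMap.toContinuousLinearMap (Matrix.mulVecLin A)).hasFDerivAt.comp_hasDerivAt t hf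

theorem HasDerivAt.half_mulVec_dotProduct_self {A : Matrix ι ι ℝ} (hA : Aᵀ = A)
    (hf : HasDerivAt f f' t) :
    HasDerivAt (fun s => (1 / 2) * (A *ᵥ f s ⬝ᵥ f s)) (A *ᵥ f' ⬝ᵥ f t) t := by
  have hsymm : A *ᵥ f t ⬝ᵥ f' = A *ᵥ f' ⬝ᵥ f t := by
    rw [dotProduct_comm, dotProduct_mulVec, ← mulVec_transpose, hA, dotProduct_comm]
  refine (((hf.mulVec A).dotProduct hf).const_mul (1 / 2)).congr_deriv ?_
  rw [hsymm]
  ring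

end Calculus

theorem cross_dotProduct_rotate (u v w : Fin 3 → ℝ) : u ⨯₃ v ⬝ᵥ w = w ⨯₃ u ⬝ᵥ v := by
  rw [dotProduct_comm, triple_product_permutation, triple_product_permutation, dotProduct_comm]

theorem heavy_top_power_balance (Ω Γ χ L : Fin 3 → ℝ) (k c : ℝ) :
    (-(Ω ⨯₃ L) + (-(k • Ω) + c • Γ ⨯₃ χ)) ⬝ᵥ Ω + c * (-(Ω ⨯₃ Γ) ⬝ᵥ χ) + k * (Ω ⬝ᵥ Ω) = 0 := by
  rw [add_dotProduct, add_dotProduct, neg_dotProduct, neg_dotProduct, neg_dotProduct,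
    smul_dotProduct, smul_dotProduct, dotProduct_comm (Ω ⨯₃ L), dot_self_cross,
    cross_dotProduct_rotate Γ χ Ω, smul_eq_mul, smul_eq_mul]
  ring

theorem heavy_top_energy_conservation_general
    (I : Matrix (Fin 3) (Fin 3) ℝ) (hIsymm : Iᵀ = I)
    (m g l μ a : ℝ)
    (χ : Fin 3 → ℝ) (U T : ℝ → ℝ) (hU : ∀ s, HasDerivAt U (T s) s)
    (Ω Γ : ℝ → Fin 3 → ℝ) (S : ℝ → ℝ)
    (hΩ : Differentiable ℝ Ω) (hΓ : Differentiable ℝ Γ) (hS : Differentiable ℝ S)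
    (heq1 : ∀ t, deriv (fun s => I.mulVec (Ω s)) t
        + crossProduct (Ω t) (I.mulVec (Ω t))
      = -((8 * π * μ * a ^ 3) • Ω t) + (m * g * l) • crossProduct (Γ t) χ)
    (heq2 : ∀ t, T (S t) * deriv S t = 8 * π * μ * a ^ 3 * (Ω t ⬝ᵥ Ω t))
    (heq3 : ∀ t, deriv Γ t = -crossProduct (Ω t) (Γ t)) :
    ∀ t, deriv (fun s =>
        (1 / 2) * (I.mulVec (Ω s) ⬝ᵥ Ω s) + m * g * l * (Γ s ⬝ᵥ χ) + U (S s)) t = 0 := by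
  intro t
  have hΩt := (hΩ t).hasDerivAt
  have hmomentum : I *ᵥ deriv Ω t = -(Ω t ⨯₃ (I *ᵥ Ω t))
      + (-((8 * π * μ * a ^ 3) • Ω t) + (m * g * l) • Γ t ⨯₃ χ) := by
    rw [← (hΩt.mulVec I).deriv, ← heq1 t]
    abel
  have henergy := ((hΩt.half_mulVec_dotProduct_self hIsymm).add
    (((hΓ t).hasDerivAt.dotProduct (hasDerivAt_const t χ)).const_mul (m * g * l))).add
    ((hU (S t)).comp t (hS t).hasDerivAt)
  refine henergy.deriv.trans ?_
  rw [hmomentum, heq3 t, heq2 t, dotProduct_zero, add_zero]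
  exact heavy_top_power_balance _ _ _ _ _ _

/-- Conservation of total energy for the heavy top in a Stokes flow: along a
smooth solution of
`Π̇ + Ω × Π = −8πμa³ Ω + mgℓ Γ × χ`, `T(S) Ṡ = 8πμa³ |Ω|²`, `Γ̇ = −Ω × Γ`
(with `Π = I Ω`, `I` symmetric positive-definite, and internal energy `U` with
`U' = T > 0`), the total energy
`e = (1/2) IΩ·Ω + mgℓ Γ·χ + U(S)` is constant: `de/dt = 0`. -/
theorem heavy_top_energy_conservation
    (I : Matrix (Fin 3) (Fin 3) ℝ) (hIsymm : Iᵀ = I) (hIpos : I.PosDef)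
    (m g l μ a : ℝ) (hm : 0 < m) (hg : 0 < g) (hl : 0 < l) (hμ : 0 < μ) (ha : 0 < a)
    (χ : Fin 3 → ℝ) (U T : ℝ → ℝ) (hU : ∀ s, HasDerivAt U (T s) s) (hT : ∀ s, 0 < T s)
    (Ω Γ : ℝ → Fin 3 → ℝ) (S : ℝ → ℝ)
    (hΩ : Differentiable ℝ Ω) (hΓ : Differentiable ℝ Γ) (hS : Differentiable ℝ S)
    (heq1 : ∀ t, deriv (fun s => I.mulVec (Ω s)) t
        + crossProduct (Ω t) (I.mulVec (Ω t))
      = -((8 * π * μ * a ^ 3) • Ω t) + (m * g * l) • crossProduct (Γ t) χ)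
    (heq2 : ∀ t, T (S t) * deriv S t = 8 * π * μ * a ^ 3 * (Ω t ⬝ᵥ Ω t))
    (heq3 : ∀ t, deriv Γ t = -crossProduct (Ω t) (Γ t)) :
    ∀ t, deriv (fun s =>
        (1 / 2) * (I.mulVec (Ω s) ⬝ᵥ Ω s) + m * g * l * (Γ s ⬝ᵥ χ) + U (S s)) t = 0 :=
  heavy_top_energy_conservation_general I hIsymm m g l μ a χ U T hU Ω Γ S hΩ hΓ hS heq1 heq2 heq3
end
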